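/- arXiv:1102.0982 — 2 statements merged into one kernel-verified Lean document; each statement's English description precedes it below -/
import Mathlib

section
/- Suppose U and V are open subsets of the Λ-duplicate D such that the restrictions of the natural projection π : D → Λ to U and to V are injective, and π(U) = π(V) = (r,t] for some r ∈ Λ ∪ {0}, t ∈ Λ. Then there exist basic open sets W_1, …, W_k and W′_1, …, W′_k such that U = W_1 ∪ ⋯ ∪ W_k and V = W′_1 ∪ ⋯ ∪ W′_k, for every i ≤ k either W_i = W′_i or W_i ∩ W′_i = ∅, and for i ≠ j both W_i ∩ W_j and W′_i ∩ W′_j are empty. -/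
/-- An element of Kurepa's tree `Λ`: an injective function `t : α → ω` with countable
ordinal domain `α` and coinfinite range.  The function is represented as a total function
on ordinals which takes the junk value `0` outside of the domain. -/
structure Lambda : Type 1 where
  toFun : Ordinal.{0} → ℕ
  dom : Ordinal.{0}
  countable : dom.card ≤ Cardinal.aleph0
  inj : ∀ β γ, β < dom → γ < dom → toFun β = toFun γ → β = γ
  coinfinite : {n : ℕ | ∀ β, β < dom → toFun β ≠ n}.Infinite
  junk : ∀ β, ¬ β < dom → toFun β = 0

/-- The tree order on `Λ`: `s ≼ t` iff `t` extends `s`. -/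
def Lambda.le (s t : Lambda) : Prop :=
  s.dom ≤ t.dom ∧ ∀ β, β < s.dom → s.toFun β = t.toFun β

/-- The strict tree order on `Λ`. -/
def Lambda.lt (s t : Lambda) : Prop := Lambda.le s t ∧ s ≠ t

/-- `r ≺ s` for `r ∈ Λ ∪ {0}` (`none` plays the role of the extra least element `0`). -/
def precLt : Option Lambda → Lambda → Prop
  | none, _ => True
  | some r, s => Lambda.lt r s

/-- The interval `(r, t] = {s ∈ Λ : r ≺ s ≼ t}`, with `r ∈ Λ ∪ {0}`. -/
def lamIoc (r : Option Lambda) (t : Lambda) : Set Lambda :=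
  {s | precLt r s ∧ Lambda.le s t}

/-- The position of the minimum of `t` on the ordinal interval `[δ, β)`. -/
noncomputable def minPos (t : Ordinal.{0} → ℕ) (δ β : Ordinal.{0}) : Ordinal.{0} :=
  sInf {ξ | δ ≤ ξ ∧ ξ < β ∧ ∀ η, δ ≤ η → η < β → t ξ ≤ t η}

lemma minPos_lt (t : Ordinal.{0} → ℕ) {δ β : Ordinal.{0}} (h : δ < β) : minPos t δ β < β := by
  have hne : {ξ : Ordinal.{0} | δ ≤ ξ ∧ ξ < β ∧ ∀ η, δ ≤ η → η < β → t ξ ≤ t η}.Nonempty := by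
    have h1 : {n : ℕ | ∃ ξ : Ordinal.{0}, δ ≤ ξ ∧ ξ < β ∧ t ξ = n}.Nonempty :=
      ⟨t δ, δ, le_refl _, h, rfl⟩
    obtain ⟨ξ, hξ1, hξ2, hξ3⟩ := Nat.sInf_mem h1
    refine ⟨ξ, hξ1, hξ2, fun η h1' h2' => ?_⟩
    rw [hξ3]
    exact Nat.sInf_le ⟨η, h1', h2', rfl⟩
  obtain ⟨ξ, hξ⟩ := hne
  calc minPos t δ β ≤ ξ := csInf_le (OrderBot.bddBelow _) hξ
    _ < β := hξ.2.1

/-- The sequence `τ` computed from the starting ordinal `β₀` downwards: `τ` is obtained by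
repeatedly passing from `β` to the position of the minimum of `t` on `[δ, β)`, stopping upon
reaching `δ`.  The resulting finite sequence `(β_k, …, β_1)` is recorded as a list in the
order `[β_k, …, β_1]` (so concatenation of the lists corresponds to `⌢`). -/
noncomputable def tauFrom (δ : Ordinal.{0}) (t : Ordinal.{0} → ℕ) : Ordinal.{0} → List Ordinal.{0} :=
  WellFounded.fix wellFounded_lt
    (fun β IH => if h : δ < β then IH (minPos t δ β) (minPos_lt t h) ++ [minPos t δ β] else [])

/-- The finite sequence `τ(s,t)` of ordinals, for `s ≼ t` in `Λ`. -/
noncomputable def tau (s t : Lambda) : List Ordinal.{0} :=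
  tauFrom s.dom t.toFun t.dom

/-- `ℓ(s,t)`, the length of `τ(s,t)`. -/
noncomputable def ell (s t : Lambda) : ℕ := (tau s t).length

/-- The underlying set of the `Λ`-duplicate: `D = Λ × {1, -1}`. -/
abbrev Dup : Type 1 := Lambda × ℤˣ

/-- The basic open sets `W(r,t,i)` of the `Λ`-duplicate. -/
noncomputable def Wset (r : Option Lambda) (t : Lambda) (i : ℤˣ) : Set Dup :=
  {q | q.1 ∈ lamIoc r t ∧ q.2 = (-1) ^ ell q.1 t * i}

/-- The collection of all basic open sets `W(r,t,i)` with `r ≺ t`. -/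
noncomputable def WBasis : Set (Set Dup) :=
  {S | ∃ (r : Option Lambda) (t : Lambda) (i : ℤˣ), precLt r t ∧ S = Wset r t i}

/-- The topology of the `Λ`-duplicate, generated by the basic sets `W(r,t,i)`. -/
noncomputable instance : TopologicalSpace Dup := TopologicalSpace.generateFrom WBasis


/-!
The sets `(a, s]` with `a ≺ s` act as left neighbourhoods of `s`, and on a small enough one
`ℓ(x, t) = ℓ(x, s) + ℓ(s, t)`: by injectivity `t` takes only finitely many values below its
minimum on `[dom s, dom t)` at positions below `dom s`, and once `dom x` exceeds all of them
`τ(x, t) = τ(x, s) ⌢ τ(s, t)`. Hence every open set containing `(s, j)` contains a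
basic set `W(a, s, j)`. Since ordinals are well founded, `(r, t]` is then partitioned into
finitely many intervals `(a, b]` over which `U` and `V` contain basic sets `W(a, b, i)` and
`W(a, b, j)`; injectivity of `π` on `U` and `V` makes these exhaust `U` and `V`, and the two
sets over the same interval coincide or are disjoint according as `i = j` or not.
-/

open Set Filter Topology

section Tau

variable (f : Ordinal.{0} → ℕ)

lemma minPos_spec {δ β : Ordinal.{0}} (h : δ < β) :
    δ ≤ minPos f δ β ∧ minPos f δ β < β ∧ ∀ η, δ ≤ η → η < β → f (minPos f δ β) ≤ f η := by
  have hne : (Ico δ β).Nonempty := ⟨δ, le_rfl, h⟩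
  obtain ⟨hlo, hhi⟩ := Function.argminOn_mem f _ hne
  exact csInf_mem (s := {ξ | δ ≤ ξ ∧ ξ < β ∧ ∀ η, δ ≤ η → η < β → f ξ ≤ f η})
    ⟨_, hlo, hhi, fun η h₁ h₂ => Function.argminOn_le f (Ico δ β) ⟨h₁, h₂⟩⟩

variable {f}

lemma minPos_eq_of_forall_le {δ ξ β : Ordinal.{0}} (hf : InjOn f (Iio β)) (hδξ : δ ≤ ξ)
    (hξβ : ξ < β) (hmin : ∀ η, δ ≤ η → η < β → f ξ ≤ f η) : minPos f δ β = ξ := by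
  obtain ⟨hlo, hhi, hle⟩ := minPos_spec f (hδξ.trans_lt hξβ)
  exact hf hhi hξβ ((hle ξ hδξ hξβ).antisymm (hmin _ hlo hhi))

variable (f) in
lemma tauFrom_eq (δ β : Ordinal.{0}) :
    tauFrom δ f β = if δ < β then tauFrom δ f (minPos f δ β) ++ [minPos f δ β] else [] := by
  rw [tauFrom, WellFounded.fix_eq, dite_eq_ite]

lemma tauFrom_congr {g : Ordinal.{0} → ℕ} {δ β : Ordinal.{0}} (hfg : EqOn f g (Iio β)) :
    tauFrom δ f β = tauFrom δ g β := by
  induction β using WellFoundedLT.induction with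
  | _ β ih =>
  rw [tauFrom_eq f, tauFrom_eq g]
  split_ifs with h
  · have hmin : minPos f δ β = minPos g δ β := by
      unfold minPos
      congr 1
      ext ξ
      refine and_congr_right fun _ => and_congr_right fun hξ => ?_
      refine forall_congr' fun η => imp_congr_right fun _ => imp_congr_right fun hη => ?_
      rw [hfg hξ, hfg hη]
    rw [hmin, ih _ (minPos_lt g h) (hfg.mono (Iio_subset_Iio (minPos_lt g h).le))]
  · rfl

lemma tauFrom_eventually_eq_append {β β' : Ordinal.{0}} (hββ' : β ≤ β') (hf : InjOn f (Iio β')) :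
    ∀ᶠ γ in 𝓝[≤] β, tauFrom γ f β' = tauFrom γ f β ++ tauFrom β f β' := by
  induction β' using WellFoundedLT.induction with
  | _ β' ih =>
  rcases hββ'.eq_or_lt with rfl | hlt
  · refine Eventually.of_forall fun γ => ?_
    rw [tauFrom_eq f β β, if_neg (lt_irrefl β), List.append_nil]
  obtain ⟨hβm, hmβ', hmin⟩ := minPos_spec f hlt
  set m := minPos f β β'
  -- Injectivity leaves only finitely many positions below `β` with a value `≤ f m`;
  -- once `γ` is above all of them, the minimum of `f` on `[γ, β')` is still attained at `m`.
  have hfin : {η | η < β ∧ f η ≤ f m}.Finite :=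
    Finite.of_finite_image ((finite_Iic (f m)).subset (by rintro _ ⟨η, hη, rfl⟩; exact hη.2))
      (hf.mono fun η hη => hη.1.trans hlt)
  have hbig : ∀ᶠ γ in 𝓝[≤] β, ∀ η ∈ {η | η < β ∧ f η ≤ f m}, η < γ :=
    (eventually_all_finite hfin).2 fun η hη =>
      eventually_nhdsWithin_of_eventually_nhds (eventually_gt_nhds hη.1)
  filter_upwards [self_mem_nhdsWithin, hbig, ih m hmβ' hβm (hf.mono (Iio_subset_Iio hmβ'.le))]
    with γ (hγβ : γ ≤ β) hγ hm
  have hpos : minPos f γ β' = m := by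
    refine minPos_eq_of_forall_le hf (hγβ.trans hβm) hmβ' fun η hγη hηβ' => ?_
    rcases lt_or_ge η β with hηβ | hβη
    · by_contra! hη
      exact (hγ η ⟨hηβ, hη.le⟩).not_ge hγη
    · exact hmin η hβη hηβ'
  rw [tauFrom_eq f γ β', if_pos (hγβ.trans_lt hlt), hpos, hm, tauFrom_eq f β β', if_pos hlt,
    List.append_assoc]

end Tau

namespace Lambda

lemma ext_of_dom {s t : Lambda} (hd : s.dom = t.dom)
    (hf : ∀ β < s.dom, s.toFun β = t.toFun β) : s = t := by
  obtain ⟨f, d, _, _, _, hj⟩ := s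
  obtain ⟨g, e, _, _, _, hj'⟩ := t
  dsimp only at hd hf
  subst hd
  obtain rfl : f = g := funext fun β => by
    by_cases hβ : β < d
    · exact hf β hβ
    · rw [hj β hβ, hj' β hβ]
  rfl

instance : PartialOrder Lambda where
  le := Lambda.le
  lt := Lambda.lt
  le_refl _ := ⟨le_rfl, fun _ _ => rfl⟩
  le_trans _ _ _ h₁ h₂ :=
    ⟨h₁.1.trans h₂.1, fun β hβ => (h₁.2 β hβ).trans (h₂.2 β (hβ.trans_le h₁.1))⟩
  le_antisymm _ _ h₁ h₂ := ext_of_dom (h₁.1.antisymm h₂.1) h₁.2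
  lt_iff_le_not_ge _ _ :=
    ⟨fun h => ⟨h.1, fun h' => h.2 (ext_of_dom (h.1.1.antisymm h'.1) h.1.2)⟩,
      fun h => ⟨h.1, fun he => h.2 (he ▸ ⟨le_rfl, fun _ _ => rfl⟩)⟩⟩

variable {s t x y b : Lambda}

lemma dom_le_dom (h : s ≤ t) : s.dom ≤ t.dom := h.1

lemma dom_lt_dom (h : s < t) : s.dom < t.dom :=
  (dom_le_dom h.le).lt_of_ne fun hd => h.ne (ext_of_dom hd h.le.2)

lemma le_of_dom_le (hx : x ≤ b) (hy : y ≤ b) (h : x.dom ≤ y.dom) : x ≤ y :=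
  ⟨h, fun β hβ => (hx.2 β hβ).trans (hy.2 β (hβ.trans_le h)).symm⟩

lemma le_or_lt_of_le_of_le (hx : x ≤ b) (hy : y ≤ b) : x ≤ y ∨ y < x :=
  (le_or_gt x.dom y.dom).imp (le_of_dom_le hx hy) fun h =>
    (le_of_dom_le hy hx h.le).lt_of_ne fun he => h.ne (congrArg dom he)

lemma lt_of_dom_lt (hx : x ≤ b) (hy : y ≤ b) (h : x.dom < y.dom) : x < y :=
  (le_or_lt_of_le_of_le hy hx).resolve_left fun h' => h.not_ge (dom_le_dom h')

noncomputable def restrict (t : Lambda) (β : Ordinal.{0}) (hβ : β ≤ t.dom) : Lambda where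
  toFun γ := if γ < β then t.toFun γ else 0
  dom := β
  countable := (Ordinal.card_le_card hβ).trans t.countable
  inj γ γ' hγ hγ' h := by
    simp only [if_pos hγ, if_pos hγ'] at h
    exact t.inj γ γ' (hγ.trans_le hβ) (hγ'.trans_le hβ) h
  coinfinite := t.coinfinite.mono fun n hn γ hγ => by
    simpa only [if_pos hγ] using hn γ (hγ.trans_le hβ)
  junk _ h := if_neg h

lemma restrict_lt {β : Ordinal.{0}} (hβ : β < t.dom) : t.restrict β hβ.le < t :=
  lt_of_dom_lt ⟨hβ.le, fun _ hγ => if_pos hγ⟩ le_rfl hβ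

/-- The neighbourhood filter of `s` for the topology on `Λ` with basic sets `(a, s]`. -/
def nhdsBelow (s : Lambda) : Filter Lambda :=
  comap dom (𝓝[≤] s.dom) ⊓ 𝓟 (Iic s)

lemma tendsto_dom_nhdsBelow (s : Lambda) : Tendsto dom (nhdsBelow s) (𝓝[≤] s.dom) :=
  tendsto_comap.mono_left inf_le_left

lemma hasBasis_nhdsBelow (s : Lambda) :
    (nhdsBelow s).HasBasis (precLt · s) (lamIoc · s) := by
  refine ⟨fun S => ?_⟩
  simp only [nhdsBelow, mem_inf_principal, mem_comap]
  constructor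
  · rintro ⟨T, hT, hTS⟩
    rcases (zero_le (a := s.dom)).eq_or_lt with h0 | hpos
    · refine ⟨none, trivial, fun x hx => hTS ?_ hx.2⟩
      have hx0 : x.dom = s.dom := le_antisymm (dom_le_dom hx.2) (h0 ▸ zero_le)
      change x.dom ∈ T
      exact hx0 ▸ mem_of_mem_nhdsWithin self_mem_Iic hT
    · obtain ⟨l, hl, hlT⟩ := (mem_nhdsLE_iff_exists_Ioc_subset' hpos).1 hT
      exact ⟨some (s.restrict l hl.le), restrict_lt hl,
        fun x hx => hTS (hlT ⟨dom_lt_dom hx.1, dom_le_dom hx.2⟩) hx.2⟩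
  · rintro ⟨_ | a, ha, haS⟩
    · exact ⟨univ, univ_mem, fun x _ hx => haS ⟨trivial, hx⟩⟩
    · change a < s at ha
      exact ⟨Ioi a.dom,
        eventually_nhdsWithin_of_eventually_nhds (eventually_gt_nhds (dom_lt_dom ha)),
        fun x hx hxs => haS ⟨lt_of_dom_lt ha.le hxs hx, hxs⟩⟩

lemma tau_eq_tauFrom (hst : s ≤ t) (x : Lambda) : tau x s = tauFrom x.dom t.toFun s.dom :=
  tauFrom_congr fun β hβ => hst.2 β hβ

lemma eventually_ell_eq_add (hst : s ≤ t) :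
    ∀ᶠ x in nhdsBelow s, ell x t = ell x s + ell s t := by
  have hinj : InjOn t.toFun (Iio t.dom) := fun β hβ γ hγ h => t.inj β γ hβ hγ h
  filter_upwards [(tendsto_dom_nhdsBelow s).eventually
    (tauFrom_eventually_eq_append hst.1 hinj)] with x hx
  rw [ell, ell, ell, tau, hx, ← tau_eq_tauFrom hst, List.length_append]
  rfl

end Lambda

open Lambda

section Intervals

variable {r a : Option Lambda} {s t x : Lambda}

lemma mem_lamIoc : x ∈ lamIoc r t ↔ precLt r x ∧ x ≤ t := Iff.rfl

lemma precLt.trans_le (h : precLt a x) (hxs : x ≤ s) : precLt a s := by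
  cases a with
  | none => trivial
  | some a => exact lt_of_lt_of_le (show a < x from h) hxs

lemma lamIoc_subset_lamIoc_right (h : s ≤ t) : lamIoc r s ⊆ lamIoc r t :=
  fun _ hx => ⟨hx.1, (mem_lamIoc.1 hx).2.trans h⟩

lemma lamIoc_eq_empty (h : ¬ precLt r t) : lamIoc r t = ∅ :=
  eq_empty_of_forall_notMem fun _ hx => h (hx.1.trans_le (mem_lamIoc.1 hx).2)

lemma lamIoc_some_union {a : Lambda} (hra : precLt r a) (hat : a ≤ t) :
    lamIoc (some a) t ∪ lamIoc r a = lamIoc r t := by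
  refine Subset.antisymm (union_subset
    (fun x hx => ⟨hra.trans_le (show a < x from hx.1).le, hx.2⟩)
    (lamIoc_subset_lamIoc_right hat)) fun x hx => ?_
  rcases le_or_lt_of_le_of_le (mem_lamIoc.1 hx).2 hat with hxa | hax
  · exact Or.inr ⟨hx.1, hxa⟩
  · exact Or.inl ⟨hax, hx.2⟩

lemma disjoint_lamIoc_some {a : Lambda} : Disjoint (lamIoc (some a) t) (lamIoc r a) :=
  disjoint_left.2 fun _ hx hx' => (show a < _ from hx.1).not_ge hx'.2

lemma exists_eq_some_mem_lamIoc_of_not_subset (hat : precLt a t)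
    (h : ¬ lamIoc r t ⊆ lamIoc a t) : ∃ a₀, a = some a₀ ∧ a₀ ∈ lamIoc r t := by
  obtain ⟨x, hx, hxa⟩ := not_subset.1 h
  cases a with
  | none => exact absurd ⟨trivial, hx.2⟩ hxa
  | some a =>
    change a < t at hat
    refine ⟨a, rfl, ?_, hat.le⟩
    rcases le_or_lt_of_le_of_le (mem_lamIoc.1 hx).2 hat.le with hxa' | hax
    · exact hx.1.trans_le hxa'
    · exact absurd ⟨hax, hx.2⟩ hxa

end Intervals

/-- Compactness of `(r, t]` for the interval topology: a cover by neighbourhoods `(a, b]` of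
each of its points refines to a finite partition into intervals. -/
theorem exists_partition_lamIoc (P : Option Lambda → Lambda → Prop)
    (hP : ∀ a a' b, lamIoc a' b ⊆ lamIoc a b → P a b → P a' b)
    (r : Option Lambda) (t : Lambda)
    (hloc : ∀ b ∈ lamIoc r t, ∃ a, precLt a b ∧ P a b) :
    ∃ L : List (Option Lambda × Lambda), (∀ p ∈ L, precLt p.1 p.2 ∧ P p.1 p.2) ∧
      ⋃ p ∈ L, lamIoc p.1 p.2 = lamIoc r t ∧
      L.Pairwise (fun p q => Disjoint (lamIoc p.1 p.2) (lamIoc q.1 q.2)) := by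
  by_cases hrt : precLt r t
  swap
  · exact ⟨[], by simp, by simp [lamIoc_eq_empty hrt], List.Pairwise.nil⟩
  obtain ⟨a, hat, hPa⟩ := hloc t (mem_lamIoc.2 ⟨hrt, le_rfl⟩)
  by_cases hsub : lamIoc r t ⊆ lamIoc a t
  · exact ⟨[(r, t)], by simpa using ⟨hrt, hP a r t hsub hPa⟩, by simp,
      List.pairwise_singleton _ _⟩
  obtain ⟨a, rfl, hra, hat'⟩ := exists_eq_some_mem_lamIoc_of_not_subset hat hsub
  obtain ⟨L, hLP, hLU, hLd⟩ := exists_partition_lamIoc P hP r a fun b hb =>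
    hloc b (lamIoc_subset_lamIoc_right hat' hb)
  refine ⟨(some a, t) :: L, ?_, ?_, ?_⟩
  · exact List.forall_mem_cons.2 ⟨⟨hat, hPa⟩, hLP⟩
  · simp only [List.mem_cons, iUnion_iUnion_eq_or_left, hLU, lamIoc_some_union hra hat']
  · refine List.pairwise_cons.2
      ⟨fun p hp => (disjoint_lamIoc_some (r := r)).mono_right ?_, hLd⟩
    exact hLU ▸ subset_biUnion_of_mem (u := fun p : Option Lambda × Lambda => lamIoc p.1 p.2) hp
termination_by t.dom
decreasing_by exact dom_lt_dom hat

section Duplicate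

variable {U V : Set Dup} {a a' : Option Lambda} {s t : Lambda} {i j : ℤˣ}

lemma Wset_subset_iff : Wset a t i ⊆ U ↔ ∀ x ∈ lamIoc a t, (x, (-1) ^ ell x t * i) ∈ U :=
  ⟨fun h x hx => h ⟨hx, rfl⟩, fun h q hq => by
    rw [← Prod.mk.eta (p := q), hq.2]
    exact h q.1 hq.1⟩

lemma Wset_mono (h : lamIoc a' t ⊆ lamIoc a t) : Wset a' t i ⊆ Wset a t i :=
  fun _ hq => ⟨h hq.1, hq.2⟩

lemma Wset_eq_or_inter_eq_empty (a : Option Lambda) (t : Lambda) (i j : ℤˣ) :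
    Wset a t i = Wset a t j ∨ Wset a t i ∩ Wset a t j = ∅ := by
  rcases eq_or_ne i j with rfl | hij
  · exact Or.inl rfl
  · exact Or.inr (eq_empty_of_forall_notMem fun q hq =>
      hij (mul_left_cancel (hq.1.2.symm.trans hq.2.2)))

lemma Wset_inter_eq_empty {b : Option Lambda} {u : Lambda}
    (h : Disjoint (lamIoc a t) (lamIoc b u)) (i j : ℤˣ) : Wset a t i ∩ Wset b u j = ∅ :=
  disjoint_iff_inter_eq_empty.1
    ((h.preimage Prod.fst).mono (fun _ hq => hq.1) fun _ hq => hq.1)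

lemma eventually_mem_Wset (h : (s, j) ∈ Wset a t i) :
    ∀ᶠ x in nhdsBelow s, (x, (-1) ^ ell x s * j) ∈ Wset a t i := by
  obtain ⟨⟨has, hst⟩, hj⟩ := h
  filter_upwards [(hasBasis_nhdsBelow s).mem_of_mem has, eventually_ell_eq_add hst] with x hx hell
  refine ⟨⟨hx.1, (mem_lamIoc.1 hx).2.trans hst⟩, ?_⟩
  change (-1) ^ ell x s * j = (-1) ^ ell x t * i
  rw [show j = (-1) ^ ell s t * i from hj, hell, pow_add, mul_assoc]

lemma eventually_mem_of_isOpen (hU : IsOpen U) (hs : (s, j) ∈ U) :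
    ∀ᶠ x in nhdsBelow s, (x, (-1) ^ ell x s * j) ∈ U := by
  induction (hU : TopologicalSpace.GenerateOpen WBasis U) with
  | basic W hW =>
    obtain ⟨a, t, i, -, rfl⟩ := hW
    exact eventually_mem_Wset hs
  | univ => exact Eventually.of_forall fun _ => mem_univ _
  | inter W₁ W₂ _ _ ih₁ ih₂ => exact (ih₁ hs.1).and (ih₂ hs.2)
  | sUnion S _ ih =>
    obtain ⟨W, hW, hsW⟩ := hs
    exact (ih W hW hsW).mono fun x hx => ⟨W, hW, hx⟩

lemma exists_Wset_subset_and_Wset_subset (hU : IsOpen U) (hV : IsOpen V)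
    (hsU : s ∈ Prod.fst '' U) (hsV : s ∈ Prod.fst '' V) :
    ∃ a, precLt a s ∧ ∃ i j, Wset a s i ⊆ U ∧ Wset a s j ⊆ V := by
  obtain ⟨⟨_, i⟩, hi, rfl⟩ := hsU
  obtain ⟨⟨_, j⟩, hj, rfl⟩ := hsV
  obtain ⟨a, ha, h⟩ := (hasBasis_nhdsBelow _).eventually_iff.1
    ((eventually_mem_of_isOpen hU hi).and (eventually_mem_of_isOpen hV hj))
  exact ⟨a, ha, i, j, Wset_subset_iff.2 fun x hx => (h hx).1,
    Wset_subset_iff.2 fun x hx => (h hx).2⟩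

lemma eq_iUnion_Wset {ι : Type*} {A : ι → Option Lambda} {B : ι → Lambda} {I : ι → ℤˣ}
    (hinj : InjOn Prod.fst U) (hW : ∀ m, Wset (A m) (B m) (I m) ⊆ U)
    (hcov : Prod.fst '' U ⊆ ⋃ m, lamIoc (A m) (B m)) : U = ⋃ m, Wset (A m) (B m) (I m) := by
  refine Subset.antisymm (fun p hp => ?_) (iUnion_subset hW)
  obtain ⟨m, hm⟩ := mem_iUnion.1 (hcov ⟨p, hp, rfl⟩)
  have hq : (p.1, (-1) ^ ell p.1 (B m) * I m) ∈ Wset (A m) (B m) (I m) := ⟨hm, rfl⟩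
  exact mem_iUnion.2 ⟨m, hinj hp (hW m hq) rfl ▸ hq⟩

end Duplicate

/-- If `U, V ⊆ D` are open, the projection `π` is injective on each of them, and
`π(U) = π(V) = (r,t]`, then `U` and `V` decompose into basic open sets `W₁,…,W_k` and
`W′₁,…,W′_k` such that each `W_i` either equals `W′_i` or is disjoint from it, and the
`W_i` (resp. `W′_i`) are pairwise disjoint. -/
theorem refinement_lemma (U V : Set Dup) (r : Option Lambda) (t : Lambda)
    (hU : IsOpen U) (hV : IsOpen V)
    (hUinj : Set.InjOn Prod.fst U) (hVinj : Set.InjOn Prod.fst V)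
    (hUim : Prod.fst '' U = lamIoc r t) (hVim : Prod.fst '' V = lamIoc r t) :
    ∃ (k : ℕ) (Ws Ws' : Fin k → Set Dup),
      (∀ i, Ws i ∈ WBasis) ∧ (∀ i, Ws' i ∈ WBasis) ∧
      U = ⋃ i, Ws i ∧ V = ⋃ i, Ws' i ∧
      (∀ i, Ws i = Ws' i ∨ Ws i ∩ Ws' i = ∅) ∧
      (∀ i j, i ≠ j → Ws i ∩ Ws j = ∅ ∧ Ws' i ∩ Ws' j = ∅) := by
  obtain ⟨L, hLP, hLU, hLd⟩ :=
    exists_partition_lamIoc (fun a b => ∃ i j, Wset a b i ⊆ U ∧ Wset a b j ⊆ V)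
      (fun _ _ _ h ⟨i, j, hi, hj⟩ => ⟨i, j, (Wset_mono h).trans hi, (Wset_mono h).trans hj⟩)
      r t fun b hb => exists_Wset_subset_and_Wset_subset hU hV (hUim ▸ hb) (hVim ▸ hb)
  choose! I J hI hJ using fun p hp => (hLP p hp).2
  set p : Fin L.length → Option Lambda × Lambda := L.get
  have hp : ∀ m, p m ∈ L := L.get_mem
  have hcov : lamIoc r t = ⋃ m, lamIoc (p m).1 (p m).2 := by
    rw [← hLU]
    ext x
    simp [List.mem_iff_get, p]
  have hdisj : ∀ m n, m ≠ n → Disjoint (lamIoc (p m).1 (p m).2) (lamIoc (p n).1 (p n).2) :=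
    fun m n hmn => hmn.lt_or_gt.elim hLd.rel_get_of_lt fun h => (hLd.rel_get_of_lt h).symm
  refine ⟨L.length, fun m => Wset (p m).1 (p m).2 (I (p m)),
    fun m => Wset (p m).1 (p m).2 (J (p m)), fun m => ⟨_, _, _, (hLP _ (hp m)).1, rfl⟩,
    fun m => ⟨_, _, _, (hLP _ (hp m)).1, rfl⟩,
    eq_iUnion_Wset hUinj (fun m => hI _ (hp m)) (hUim.trans hcov).subset,
    eq_iUnion_Wset hVinj (fun m => hJ _ (hp m)) (hVim.trans hcov).subset,
    fun m => Wset_eq_or_inter_eq_empty _ _ _ _,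
    fun m n hmn =>
      ⟨Wset_inter_eq_empty (hdisj m n hmn) _ _, Wset_inter_eq_empty (hdisj m n hmn) _ _⟩⟩
end

section
/- Let f ∈ C₀(D) be a continuous real-valued function on the Λ-duplicate D vanishing at infinity, let δ > 0, and let (s,i) ∈ D. Then there are only finitely many (t,j) ∈ (s,i)⁺ satisfying |f(t,j)| ≥ δ. -/
/-- `s⁺`, the set of immediate successors of `s` in `Λ`. -/
def succs (s : Lambda) : Set Lambda :=
  {t | Lambda.lt s t ∧ ∀ u, Lambda.lt s u → Lambda.lt u t → False}


/-!
The points of `D` lying over `s⁺` form a closed discrete set: a point `(u, j)` has the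
basic neighbourhood `W(v, u, j)` if some `v ∈ s⁺` lies strictly below `u`, and `W(0, u, j)`
otherwise, and either one meets `s⁺ × {1, -1}` at most in `(u, j)`, because two successors of `s`
below a common node coincide. Since `f` vanishes at infinity, `{q | δ ≤ |f q|}` is compact, and a
compact set meets a closed discrete set in finitely many points.
-/

open Filter

lemma ZeroAtInftyContinuousMap.isCompact_setOf_le_norm {α β : Type*} [TopologicalSpace α]
    [NormedAddCommGroup β] (f : ZeroAtInftyContinuousMap α β) {ε : ℝ} (hε : 0 < ε) :
    IsCompact {x | ε ≤ ‖f x‖} := by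
  have hsmall : ∀ᶠ x in cocompact α, ‖f x‖ < ε := by
    simpa only [dist_zero_right] using Metric.tendsto_nhds.mp (zero_at_infty f) ε hε
  obtain ⟨K, hK, hKsub⟩ := mem_cocompact.mp hsmall
  refine hK.of_isClosed_subset (isClosed_le continuous_const (map_continuous f).norm) ?_
  intro x (hx : ε ≤ ‖f x‖)
  by_contra hxK
  exact (hKsub hxK : ‖f x‖ < ε).not_ge hx

namespace Lambda

lemma le_refl (u : Lambda) : u.le u := ⟨le_rfl, fun _ _ => rfl⟩

lemma le_total_of_le {v w u : Lambda} (hv : v.le u) (hw : w.le u) : v.le w ∨ w.le v := by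
  rcases le_total v.dom w.dom with h | h
  · exact Or.inl ⟨h, fun β hβ => (hv.2 β hβ).trans (hw.2 β (hβ.trans_le h)).symm⟩
  · exact Or.inr ⟨h, fun β hβ => (hw.2 β hβ).trans (hv.2 β (hβ.trans_le h)).symm⟩

end Lambda

lemma eq_of_mem_succs_of_le {s t t' : Lambda} (ht : t ∈ succs s) (ht' : t' ∈ succs s)
    (h : t.le t') : t = t' := by
  by_contra hne
  exact ht'.2 t ht.1 ⟨h, hne⟩

lemma eq_of_mem_succs_of_le_of_le {s t t' u : Lambda} (ht : t ∈ succs s) (ht' : t' ∈ succs s)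
    (h : t.le u) (h' : t'.le u) : t = t' := by
  rcases Lambda.le_total_of_le h h' with hc | hc
  · exact eq_of_mem_succs_of_le ht ht' hc
  · exact (eq_of_mem_succs_of_le ht' ht hc).symm

lemma ell_self (u : Lambda) : ell u u = 0 := by
  unfold ell tau tauFrom
  rw [WellFounded.fix_eq]
  simp

lemma isOpen_Wset {r : Option Lambda} {t : Lambda} (i : ℤˣ) (h : precLt r t) :
    IsOpen (Wset r t i) :=
  TopologicalSpace.GenerateOpen.basic _ ⟨r, t, i, h, rfl⟩

lemma mem_Wset_self {r : Option Lambda} {t : Lambda} (i : ℤˣ) (h : precLt r t) :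
    (t, i) ∈ Wset r t i :=
  ⟨⟨h, Lambda.le_refl t⟩, by simp [ell_self]⟩

lemma exists_isOpen_forall_mem_succs_eq (s : Lambda) (x : Dup) :
    ∃ U : Set Dup, IsOpen U ∧ x ∈ U ∧ ∀ z ∈ U, z.1 ∈ succs s → z = x := by
  obtain ⟨u, j⟩ := x
  by_cases hbelow : ∃ v ∈ succs s, v.lt u
  · obtain ⟨v, hv, hvu⟩ := hbelow
    refine ⟨Wset (some v) u j, isOpen_Wset j hvu, mem_Wset_self j hvu, ?_⟩
    rintro ⟨w, k⟩ ⟨⟨hvw, hwu⟩, -⟩ hw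
    exact absurd (eq_of_mem_succs_of_le_of_le hv hw hvu.1 hwu) hvw.2
  · push Not at hbelow
    refine ⟨Wset none u j, isOpen_Wset j trivial, mem_Wset_self j trivial, ?_⟩
    rintro ⟨w, k⟩ ⟨⟨-, hwu⟩, hk⟩ hw
    obtain rfl : w = u := by
      by_contra hne
      exact hbelow w hw ⟨hwu, hne⟩
    rw [show k = j by simpa [ell_self] using hk]

lemma isClosed_and_isDiscrete_setOf_mem_succs (s : Lambda) :
    IsClosed {q : Dup | q.1 ∈ succs s} ∧ IsDiscrete {q : Dup | q.1 ∈ succs s} := by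
  refine isClosed_and_discrete_iff.mpr fun x => disjoint_principal_right.mpr ?_
  obtain ⟨U, hU, hxU, hUx⟩ := exists_isOpen_forall_mem_succs_eq s x
  exact mem_nhdsWithin.mpr ⟨U, hU, hxU, fun z ⟨hzU, hzx⟩ hz => hzx (hUx z hzU hz)⟩

theorem finitely_many_large_successors_general (f : ZeroAtInftyContinuousMap Dup ℝ)
    (δ : ℝ) (hδ : 0 < δ) (s : Lambda) :
    {q : Dup | q.1 ∈ succs s ∧ δ ≤ |f q|}.Finite := by
  obtain ⟨hclosed, hdiscrete⟩ := isClosed_and_isDiscrete_setOf_mem_succs s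
  exact ((f.isCompact_setOf_le_norm hδ).inter_left hclosed).finite
    (hdiscrete.mono Set.inter_subset_left)

/-- For `f ∈ C₀(D)` and `δ > 0`, given `(s,i) ∈ D` there are only finitely many
`(t,j) ∈ (s,i)⁺ = s⁺ × {1,-1}` with `|f(t,j)| ≥ δ`. -/
theorem finitely_many_large_successors (f : ZeroAtInftyContinuousMap Dup ℝ)
    (δ : ℝ) (hδ : 0 < δ) (s : Lambda) (i : ℤˣ) :
    {q : Dup | q.1 ∈ succs s ∧ δ ≤ |f q|}.Finite :=
  finitely_many_large_successors_general f δ hδ s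
end
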